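/- arXiv:1808.09786 — 5 statements merged into one kernel-verified Lean document; each statement's English description precedes it below -/
import Mathlib

section
/- In the virtual pure braid group VP_{n+1}, the elements a_{k,n+1-k} = s_{n-1}s_{n-2}⋯s_k ŝ_{k-1} s_{k-2}⋯s_0(λ_{1,2}) (where ŝ_{k-1} means s_{k-1} is omitted) pairwise commute: a_{k,n+1-k} a_{l,n+1-l} = a_{l,n+1-l} a_{k,n+1-k} for all 1 ≤ k, l ≤ n. -/
/-- Index predicate for the generators `λ_{i j}` of the virtual pure braid group
`VP n`: `1 ≤ i, j ≤ n` and `i ≠ j` (1-based indices). -/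
def VPIdx (n : ℕ) (p : ℕ × ℕ) : Prop :=
  1 ≤ p.1 ∧ p.1 ≤ n ∧ 1 ≤ p.2 ∧ p.2 ≤ n ∧ p.1 ≠ p.2

instance (n : ℕ) (p : ℕ × ℕ) : Decidable (VPIdx n p) := by
  unfold VPIdx; infer_instance

/-- Generators `λ_{i j}`, `1 ≤ i ≠ j ≤ n`. -/
def VPGen (n : ℕ) := {p : ℕ × ℕ // VPIdx n p}

/-- The generator `λ_{i j}` as an element of the free group (junk value `1` out of range). -/
def lamW {n : ℕ} (i j : ℕ) : FreeGroup (VPGen n) :=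
  if h : VPIdx n (i, j) then FreeGroup.of ⟨(i, j), h⟩ else 1

/-- The defining relations of the virtual pure braid group `VP n`:
`λ_{ij}λ_{kl} = λ_{kl}λ_{ij}` and `λ_{ki}λ_{kj}λ_{ij} = λ_{ij}λ_{kj}λ_{ki}`
(distinct letters denote distinct indices). -/
def VPRels (n : ℕ) : Set (FreeGroup (VPGen n)) :=
  {w | ∃ i j k l : ℕ, VPIdx n (i, j) ∧ VPIdx n (k, l) ∧ i ≠ k ∧ i ≠ l ∧ j ≠ k ∧ j ≠ l ∧
      w = lamW i j * lamW k l * (lamW k l * lamW i j)⁻¹} ∪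
  {w | ∃ i j k : ℕ, VPIdx n (i, j) ∧ VPIdx n (k, i) ∧ VPIdx n (k, j) ∧
      w = lamW k i * lamW k j * lamW i j * (lamW i j * lamW k j * lamW k i)⁻¹}

/-- The virtual pure braid group on `n` strands. -/
abbrev VP (n : ℕ) := PresentedGroup (VPRels n)

/-- The generator `λ_{i j}` of `VP n` (junk value `1` out of range). -/
def lam' {n : ℕ} (i j : ℕ) : VP n :=
  if h : VPIdx n (i, j) then PresentedGroup.of ⟨(i, j), h⟩ else 1

/-- The product `λ_{1 l} λ_{2 l} ⋯ λ_{k-1, l}`. -/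
def conjA {n : ℕ} (k l : ℕ) : VP n :=
  ((List.range (k - 1)).map fun j => lam' (j + 1) l).prod

/-- The product `λ_{l 1}⁻¹ λ_{l 2}⁻¹ ⋯ λ_{l, k-1}⁻¹`. -/
def conjB {n : ℕ} (k l : ℕ) : VP n :=
  ((List.range (k - 1)).map fun j => (lam' l (j + 1))⁻¹).prod

/-- `s` is the family of degeneracy (strand-doubling) homomorphisms
`s_i : VP m → VP (m+1)` (`0 ≤ i ≤ m-1`), acting on the generators by the explicit
cabling formulas of Proposition 3.1 of Bardakov–Mikhailov–Wu. -/
def IsCabling (s : ∀ m : ℕ, ℕ → (VP m →* VP (m + 1))) : Prop :=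
  ∀ m k l i : ℕ, 1 ≤ k → k < l → l ≤ m → i < m →
    (s m i (lam' k l) =
      if i + 1 < k then lam' (k + 1) (l + 1)
      else if i + 1 = k then lam' k (l + 1) * lam' (k + 1) (l + 1)
      else if i + 1 < l then lam' k (l + 1)
      else if i + 1 = l then (conjA k l)⁻¹ * lam' k (l + 1) * conjA k l * lam' k l
      else lam' k l) ∧
    (s m i (lam' l k) =
      if i + 1 < k then lam' (l + 1) (k + 1)
      else if i + 1 = k then lam' (l + 1) (k + 1) * lam' (l + 1) k
      else if i + 1 < l then lam' (l + 1) k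
      else if i + 1 = l then lam' l k * ((conjB k l)⁻¹ * lam' (l + 1) k * conjB k l)
      else lam' l k)

/-- `d` is the family of face (strand-deleting) homomorphisms
`d_i : VP (m+1) → VP m` (`0 ≤ i ≤ m`), acting on the generators by the formulas
of Proposition 3.1 of Bardakov–Mikhailov–Wu. -/
def IsFace (d : ∀ m : ℕ, ℕ → (VP (m + 1) →* VP m)) : Prop :=
  ∀ m k l i : ℕ, 1 ≤ k → k < l → l ≤ m + 1 → i ≤ m →
    (d m i (lam' k l) =
      if i + 1 < k then lam' (k - 1) (l - 1)
      else if i + 1 = k then 1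
      else if i + 1 < l then lam' k (l - 1)
      else if i + 1 = l then 1
      else lam' k l) ∧
    (d m i (lam' l k) =
      if i + 1 < k then lam' (l - 1) (k - 1)
      else if i + 1 = k then 1
      else if i + 1 < l then lam' (l - 1) k
      else if i + 1 = l then 1
      else lam' l k)

/-- `ι` is the family of trivial-strand inclusions `VP m → VP (m+1)`, `λ_{ij} ↦ λ_{ij}`. -/
def IsIncl (ι : ∀ m : ℕ, VP m →* VP (m + 1)) : Prop :=
  ∀ m i j : ℕ, VPIdx m (i, j) → ι m (lam' i j) = lam' i j

/-- Iterated trivial-strand inclusion `VP p → VP (p + q)`. -/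
def iotaIter (ι : ∀ m : ℕ, VP m →* VP (m + 1)) (p : ℕ) : (q : ℕ) → (VP p →* VP (p + q))
  | 0 => MonoidHom.id (VP p)
  | q + 1 => (ι (p + q)).comp (iotaIter ι p q)

/-- The composite `s_{m} s_{m-1} ⋯ s_{skip+1} ŝ_{skip} s_{skip-1} ⋯ s_0 : VP 2 → VP (m+2)`
of `m` degeneracies with the index `skip` omitted. -/
def chain (s : ∀ m : ℕ, ℕ → (VP m →* VP (m + 1))) (skip : ℕ) :
    (m : ℕ) → (VP 2 →* VP (m + 2))
  | 0 => MonoidHom.id (VP 2)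
  | m + 1 => (s (m + 2) (if skip ≤ m then m + 1 else m)).comp (chain s skip m)

/-- The cabled element `a_{k, n+2-k} = s_{n+1-1}⋯s_k ŝ_{k-1} s_{k-2}⋯s_0(λ_{1,2}) ∈ VP (n+2)`. -/
def aa (s : ∀ m : ℕ, ℕ → (VP m →* VP (m + 1))) (n k : ℕ) : VP (n + 2) :=
  chain s (k - 1) n (lam' 1 2)

/-- The cabled element `b_{k, n+2-k} = s_{n+1-1}⋯s_k ŝ_{k-1} s_{k-2}⋯s_0(λ_{2,1}) ∈ VP (n+2)`. -/
def bb (s : ∀ m : ℕ, ℕ → (VP m →* VP (m + 1))) (n k : ℕ) : VP (n + 2) :=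
  chain s (k - 1) n (lam' 2 1)

/-- The simplicial subgroups `T_m ≤ VP (m+1)`:
`T_0 = 1`, `T_1 = VP 2`, `T_{m+2} = ⟨s_0(T_{m+1}), …, s_{m+1}(T_{m+1})⟩`. -/
def TT (s : ∀ m : ℕ, ℕ → (VP m →* VP (m + 1))) : (m : ℕ) → Subgroup (VP (m + 1))
  | 0 => ⊥
  | 1 => ⊤
  | m + 2 => ⨆ i ∈ Finset.range (m + 2), Subgroup.map (s (m + 2) i) (TT s (m + 1))

/-!
Write `C k t = colProd k t = λ_{1t} λ_{2t} ⋯ λ_{kt}`. Omitting `s_{j}` from the composite of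
degeneracies sends `λ_{12} ∈ VP 2` to the block `C (j+1) (m+2) ⋯ C (j+1) (j+2)` of `VP (m+2)`, or,
when nothing is omitted, to the column `C (m+1) (m+2)`. By induction on `m`: if both elements arise
by applying the top degeneracy they commute because their preimages do; otherwise one is a block
`B` and the other the full last column `C (t-1) t`. Splitting that column as `C (j+1) t · Q` and
the block as `C (j+1) t · B'`, repeated use of the defining relation
`λ_{ki}λ_{kj}λ_{ij} = λ_{ij}λ_{kj}λ_{ki}` shows that the word `B' · C (j+1) t · Q` equals its
reversal, and hence `B` and the column commute.
-/

def Palindromic {G : Type*} [Mul G] (x y z : G) : Prop := x * y * z = z * y * x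

namespace Palindromic

variable {G : Type*} [Group G] {x y z a b : G}

lemma mul_mul (h₁ : Palindromic x y z) (h₂ : Palindromic a b z) (hay : Commute a y)
    (hbx : Commute b x) : Palindromic (x * a) (y * b) z :=
  calc x * a * (y * b) * z = x * (a * y) * b * z := by group
    _ = x * y * (a * b * z) := by rw [hay.eq]; group
    _ = x * y * z * (b * a) := by rw [h₂]; group
    _ = z * y * (x * b) * a := by rw [h₁]; group
    _ = z * (y * b) * (x * a) := by rw [← hbx.eq]; group

lemma mul_mul_outer (h₁ : Palindromic x y z) (h₂ : Palindromic a y b) (haz : Commute a z)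
    (hbx : Commute b x) : Palindromic (a * x) y (z * b) :=
  calc a * x * y * (z * b) = a * (x * y * z) * b := by group
    _ = a * z * y * (x * b) := by rw [h₁]; group
    _ = z * (a * y * b) * x := by rw [haz.eq, ← hbx.eq]; group
    _ = z * b * y * (a * x) := by rw [h₂]; group

lemma commute_mul_mul (h : Palindromic x y z) : Commute (y * x) (y * z) :=
  calc y * x * (y * z) = y * (x * y * z) := by group
    _ = y * z * (y * x) := by rw [h]; group

end Palindromic

section Relations

variable {N : ℕ}

lemma lam'_eq_mk (i j : ℕ) : (lam' i j : VP N) = PresentedGroup.mk _ (lamW i j) := by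
  unfold lam' lamW
  split_ifs
  · rfl
  · exact (map_one _).symm

lemma lam'_eq_one {i j : ℕ} (h : ¬VPIdx N (i, j)) : (lam' i j : VP N) = 1 := dif_neg h

lemma lam'_eq_one_of_out_of_range {a : ℕ} (ha : ¬(1 ≤ a ∧ a ≤ N)) (b : ℕ) :
    (lam' a b : VP N) = 1 ∧ (lam' b a : VP N) = 1 :=
  ⟨lam'_eq_one fun h => ha ⟨h.1, h.2.1⟩, lam'_eq_one fun h => ha ⟨h.2.2.1, h.2.2.2.1⟩⟩

lemma commute_lam' {i j k l : ℕ} (hik : i ≠ k) (hil : i ≠ l) (hjk : j ≠ k) (hjl : j ≠ l) :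
    Commute (lam' i j : VP N) (lam' k l) := by
  by_cases h₁ : VPIdx N (i, j)
  · by_cases h₂ : VPIdx N (k, l)
    · simp only [Commute, SemiconjBy, lam'_eq_mk, ← map_mul]
      exact PresentedGroup.mk_eq_mk_of_mul_inv_mem
        (Or.inl ⟨i, j, k, l, h₁, h₂, hik, hil, hjk, hjl, rfl⟩)
    · rw [lam'_eq_one h₂]; exact Commute.one_right _
  · rw [lam'_eq_one h₁]; exact Commute.one_left _

lemma palindromic_lam' {i j k : ℕ} (hij : i ≠ j) (hki : k ≠ i) (hkj : k ≠ j) :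
    Palindromic (lam' k i : VP N) (lam' k j) (lam' i j) := by
  unfold Palindromic
  by_cases h : VPIdx N (i, j) ∧ VPIdx N (k, i) ∧ VPIdx N (k, j)
  · obtain ⟨h₁, h₂, h₃⟩ := h
    simp only [lam'_eq_mk, ← map_mul]
    exact PresentedGroup.mk_eq_mk_of_mul_inv_mem (Or.inr ⟨i, j, k, h₁, h₂, h₃, rfl⟩)
  · -- out-of-range generators are `1`, and an out-of-range index kills two of the three factors
    have hout : ¬(1 ≤ i ∧ i ≤ N) ∨ ¬(1 ≤ j ∧ j ≤ N) ∨ ¬(1 ≤ k ∧ k ≤ N) := by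
      simp only [VPIdx] at h; omega
    rcases hout with hout | hout | hout <;>
      simp [lam'_eq_one_of_out_of_range hout]

end Relations

section ColumnProducts

variable {N : ℕ}

def colProd (k t : ℕ) : VP N := ((List.range k).map fun i => lam' (i + 1) t).prod

def colSeg (k t : ℕ) : ℕ → VP N
  | 0 => 1
  | c + 1 => colSeg k t c * lam' (k + c + 1) t

def colBlock (k : ℕ) : ℕ → VP N
  | 0 => 1
  | c + 1 => colProd k (k + c + 1) * colBlock k c

@[simp] lemma colProd_zero (t : ℕ) : (colProd 0 t : VP N) = 1 := rfl

lemma colProd_succ (k t : ℕ) : (colProd (k + 1) t : VP N) = colProd k t * lam' (k + 1) t := by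
  simp [colProd, List.range_succ]

lemma colProd_add (k t c : ℕ) : (colProd (k + c) t : VP N) = colProd k t * colSeg k t c := by
  induction c with
  | zero => exact (mul_one _).symm
  | succ c ih => rw [← add_assoc, colProd_succ, ih, colSeg, mul_assoc]

lemma commute_lam'_colProd {a b k t : ℕ} (hka : k < a) (hkb : k < b) (hat : a ≠ t)
    (hbt : b ≠ t) : Commute (lam' a b : VP N) (colProd k t) := by
  refine Commute.list_prod_right _ _ fun y hy => ?_
  obtain ⟨i, hi, rfl⟩ := List.mem_map.mp hy
  have := List.mem_range.mp hi
  exact commute_lam' (by omega) hat (by omega) hbt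

lemma commute_lam'_colBlock {a b k c : ℕ} (ha : k + c < a) (hb : k + c < b) :
    Commute (lam' a b : VP N) (colBlock k c) := by
  induction c with
  | zero => exact Commute.one_right _
  | succ c ih =>
    exact (commute_lam'_colProd (by omega) (by omega) (by omega) (by omega)).mul_right
      (ih (by omega) (by omega))

lemma commute_colProd_colSeg {k j t c : ℕ} (hj : k + c < j) (hjt : j ≠ t) (hkt : k < t) :
    Commute (colProd k j : VP N) (colSeg k t c) := by
  induction c with
  | zero => exact Commute.one_right _
  | succ c ih =>
    exact (ih (by omega)).mul_right
      (commute_lam'_colProd (by omega) hkt (by omega) hjt.symm).symm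

lemma palindromic_colProd {j t : ℕ} (hjt : j ≠ t) {k : ℕ} (hkj : k < j) (hkt : k < t) :
    Palindromic (colProd k j : VP N) (colProd k t) (lam' j t) := by
  induction k with
  | zero => simp [Palindromic]
  | succ k ih =>
    rw [colProd_succ, colProd_succ]
    exact (ih (by omega) (by omega)).mul_mul (palindromic_lam' hjt (by omega) (by omega))
      (commute_lam'_colProd (by omega) (by omega) (by omega) hjt)
      (commute_lam'_colProd (by omega) (by omega) (by omega) hjt.symm)

lemma palindromic_colBlock {k t c : ℕ} (hct : k + c < t) :
    Palindromic (colBlock k c : VP N) (colProd k t) (colSeg k t c) := by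
  induction c with
  | zero => simp [Palindromic, colBlock, colSeg]
  | succ c ih =>
    exact (ih (by omega)).mul_mul_outer (palindromic_colProd (by omega) (by omega) (by omega))
      (commute_colProd_colSeg (by omega) (by omega) (by omega))
      (commute_lam'_colBlock (by omega) (by omega))

lemma commute_colBlock_colProd (k c : ℕ) :
    Commute (colBlock (k + 1) (c + 1) : VP N) (colProd (k + c + 1) (k + c + 2)) := by
  rw [colBlock, show k + c + 2 = k + 1 + c + 1 by omega, show k + c + 1 = k + 1 + c by omega,
    colProd_add (k + 1) _ c]
  exact (palindromic_colBlock (Nat.lt_succ_self _)).commute_mul_mul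

end ColumnProducts

section Chain

variable {s : ∀ m : ℕ, ℕ → (VP m →* VP (m + 1))}

lemma chain_succ_of_le {j m : ℕ} (h : j ≤ m) (x : VP 2) :
    chain s j (m + 1) x = s (m + 2) (m + 1) (chain s j m x) := by
  simp [chain, h]

lemma chain_succ_of_lt {j m : ℕ} (h : m < j) (x : VP 2) :
    chain s j (m + 1) x = s (m + 2) m (chain s j m x) := by
  simp [chain, Nat.not_le.mpr h]

end Chain

namespace IsCabling

variable {s : ∀ m : ℕ, ℕ → (VP m →* VP (m + 1))} (hs : IsCabling s)
include hs

lemma map_lam'_of_le {m i a b : ℕ} (ha : 1 ≤ a) (hab : a < b) (hbi : b ≤ i) (him : i < m) :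
    s m i (lam' a b) = lam' a b := by
  rw [(hs m a b i ha hab (by omega) him).1, if_neg (by omega), if_neg (by omega),
    if_neg (by omega), if_neg (by omega)]

lemma map_colProd_of_le {m i j b : ℕ} (hjb : j < b) (hbi : b ≤ i) (him : i < m) :
    s m i (colProd j b) = colProd j b := by
  induction j with
  | zero => exact map_one _
  | succ j ih =>
    rw [colProd_succ, map_mul, ih (by omega), hs.map_lam'_of_le (by omega) hjb hbi him,
      colProd_succ]

lemma map_colBlock_of_le {m i k c : ℕ} (hci : k + c ≤ i) (him : i < m) :
    s m i (colBlock k c) = colBlock k c := by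
  induction c with
  | zero => exact map_one _
  | succ c ih =>
    rw [colBlock, map_mul, ih (by omega), hs.map_colProd_of_le (by omega) (by omega) him,
      colBlock]

lemma map_colProd_shift {m i j l : ℕ} (hji : j ≤ i) (hil : i + 1 < l) (hlm : l ≤ m) :
    s m i (colProd j l) = colProd j (l + 1) := by
  induction j with
  | zero => exact map_one _
  | succ j ih =>
    rw [colProd_succ, map_mul, ih (by omega), (hs m (j + 1) l i (by omega) (by omega) hlm
      (by omega)).1, if_neg (by omega), if_neg (by omega), if_pos hil, colProd_succ]

lemma map_colProd_succ {m i l : ℕ} (hil : i + 1 < l) (hlm : l ≤ m) :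
    s m i (colProd (i + 1) l) = colProd (i + 2) (l + 1) := by
  rw [colProd_succ, map_mul, hs.map_colProd_shift le_rfl hil hlm, (hs m (i + 1) l i le_add_self
    hil hlm (by omega)).1, if_neg (by omega), if_pos rfl, colProd_succ, colProd_succ, mul_assoc]

lemma map_colProd_doubled {m i j : ℕ} (hji : j ≤ i) (him : i < m) :
    s m i (colProd j (i + 1)) = colProd j (i + 2) * colProd j (i + 1) := by
  induction j with
  | zero => simp
  | succ j ih =>
    have hconj : (conjA (j + 1) (i + 1) : VP (m + 1)) = colProd j (i + 1) := rfl
    rw [colProd_succ, map_mul, ih (by omega), (hs m (j + 1) (i + 1) i (by omega) (by omega)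
      (by omega) him).1, if_neg (by omega), if_neg (by omega), if_neg (by omega), if_pos rfl,
      hconj, colProd_succ, colProd_succ]
    group

lemma chain_of_le {j m : ℕ} (h : m ≤ j) : chain s j m (lam' 1 2) = colProd (m + 1) (m + 2) := by
  induction m with
  | zero => simp [chain, colProd_succ]
  | succ m ih =>
    rw [chain_succ_of_lt (by omega), ih (by omega)]
    exact hs.map_colProd_succ (by omega) le_rfl

lemma chain_add (j d : ℕ) : chain s j (j + d) (lam' 1 2) = colBlock (j + 1) (d + 1) := by
  induction d with
  | zero => simp [hs.chain_of_le le_rfl, colBlock]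
  | succ d ih =>
    rw [← add_assoc, chain_succ_of_le (by omega), ih, colBlock, colBlock, colBlock, map_mul,
      show j + 1 + d + 1 = j + d + 1 + 1 by omega, hs.map_colProd_doubled (by omega) (by omega),
      hs.map_colBlock_of_le (by omega) (by omega), mul_assoc,
      show j + 1 + (d + 1) + 1 = j + d + 1 + 2 by omega]

lemma commute_chain_of_le_of_lt {n j j' : ℕ} (hj : j ≤ n) (hj' : n < j') :
    Commute (chain s j (n + 1) (lam' 1 2)) (chain s j' (n + 1) (lam' 1 2)) := by
  obtain ⟨d, rfl⟩ := Nat.exists_eq_add_of_le hj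
  rw [hs.chain_of_le hj']
  show Commute (chain s j (j + (d + 1)) (lam' 1 2)) (colProd (j + d + 2) (j + d + 3))
  rw [hs.chain_add]
  exact commute_colBlock_colProd j (d + 1)

lemma commute_chain (n j j' : ℕ) :
    Commute (chain s j n (lam' 1 2)) (chain s j' n (lam' 1 2)) := by
  induction n generalizing j j' with
  | zero => exact Commute.refl _
  | succ n ih =>
    rcases le_or_gt j n with hj | hj <;> rcases le_or_gt j' n with hj' | hj'
    · rw [chain_succ_of_le hj, chain_succ_of_le hj']
      exact (ih j j').map _
    · exact hs.commute_chain_of_le_of_lt hj hj'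
    · exact (hs.commute_chain_of_le_of_lt hj' hj).symm
    · rw [hs.chain_of_le hj, hs.chain_of_le hj']

end IsCabling

theorem aa_comm_general (s : ∀ m : ℕ, ℕ → (VP m →* VP (m + 1))) (hs : IsCabling s)
    (n k l : ℕ) :
    aa s n k * aa s n l = aa s n l * aa s n k :=
  (hs.commute_chain n (k - 1) (l - 1)).eq

/-- (Lemma 1.1, first half.) In `VP (n+2)` (the virtual pure braid
group `VP_{N+1}` with `N = n+1`), the cabled elements
`a_{k, N+1-k} = s_{N-1}⋯s_k ŝ_{k-1} s_{k-2}⋯s_0(λ_{1,2})` pairwise commute for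
`1 ≤ k, l ≤ N`. -/
theorem aa_comm (s : ∀ m : ℕ, ℕ → (VP m →* VP (m + 1))) (hs : IsCabling s)
    (n k l : ℕ) (hk1 : 1 ≤ k) (hk2 : k ≤ n + 1) (hl1 : 1 ≤ l) (hl2 : l ≤ n + 1) :
    aa s n k * aa s n l = aa s n l * aa s n k :=
  aa_comm_general s hs n k l
end

section
/- In the virtual pure braid group VP_{n+1}, the elements b_{k,n+1-k} = s_{n-1}s_{n-2}⋯s_k ŝ_{k-1} s_{k-2}⋯s_0(λ_{2,1}) pairwise commute: b_{k,n+1-k} b_{l,n+1-l} = b_{l,n+1-l} b_{k,n+1-k} for all 1 ≤ k, l ≤ n. -/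
/-!
In `VP m` let `R_{j,t} = λ_{j,t} λ_{j,t-1} ⋯ λ_{j,1}` (`lamRow j t`) and let
`C_{m,k} = R_{k+1,k} R_{k+2,k} ⋯ R_{m,k}` (`lamCorner m k`) be the product of the generators
`λ_{j,i}` with `i ≤ k < j`, taken row by row. A degeneracy `s_i` sends `C_{m,k}` to
`C_{m+1,k+1}` when `i < k` and to `C_{m+1,k}` when `k ≤ i`. Hence `b_{k,m-k} = C_{m,k}`, and for
`m ≥ 3` any two of these blocks in `VP (m+1)` are the images under one `s_i` (`i ∈ {0, 1, 2}`) of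
two blocks of `VP m`. So the blocks commute by induction on `m`, starting from
`C_{3,1} C_{3,2} = λ₂₁ λ₃₁ λ₃₂ λ₃₁ = λ₃₂ λ₃₁ λ₂₁ λ₃₁ = C_{3,2} C_{3,1}`, which is the relation
`λ₃₂ λ₃₁ λ₂₁ = λ₂₁ λ₃₁ λ₃₂` of `VP 3`.
-/

theorem mk_lamW {n : ℕ} (i j : ℕ) : PresentedGroup.mk (VPRels n) (lamW i j) = lam' i j := by
  unfold lamW lam'
  split
  · rfl
  · exact map_one _

theorem lam'_mixed_rel {n i j k : ℕ} (hij : VPIdx n (i, j)) (hki : VPIdx n (k, i))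
    (hkj : VPIdx n (k, j)) :
    (lam' k i * lam' k j * lam' i j : VP n) = lam' i j * lam' k j * lam' k i := by
  simpa only [map_mul, mk_lamW] using
    PresentedGroup.mk_eq_mk_of_mul_inv_mem (rels := VPRels n)
      (x := lamW k i * lamW k j * lamW i j) (y := lamW i j * lamW k j * lamW k i)
      (Or.inr ⟨i, j, k, hij, hki, hkj, rfl⟩)

def lamRow {m : ℕ} (j : ℕ) : ℕ → VP m
  | 0 => 1
  | t + 1 => lam' j (t + 1) * lamRow j t

def lamBlock {m : ℕ} (k : ℕ) : ℕ → VP m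
  | 0 => 1
  | c + 1 => lamBlock k c * lamRow (k + 1 + c) k

def lamCorner (m k : ℕ) : VP m :=
  lamBlock k (m - k)

section

variable {m : ℕ}

@[simp] theorem lamRow_zero (j : ℕ) : (lamRow j 0 : VP m) = 1 := rfl

theorem lamRow_succ (j t : ℕ) : (lamRow j (t + 1) : VP m) = lam' j (t + 1) * lamRow j t := rfl

@[simp] theorem lamBlock_zero (k : ℕ) : (lamBlock k 0 : VP m) = 1 := rfl

theorem lamBlock_succ (k c : ℕ) :
    (lamBlock k (c + 1) : VP m) = lamBlock k c * lamRow (k + 1 + c) k := rfl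

theorem conjB_succ (k l : ℕ) : (conjB (k + 1) l : VP m) = (lamRow l k)⁻¹ := by
  induction k with
  | zero => rfl
  | succ k ih =>
    simp only [conjB, Nat.add_sub_cancel] at ih ⊢
    rw [List.range_succ, List.map_append, List.prod_append, ih, lamRow_succ, mul_inv_rev]
    simp

end

theorem lamCorner_three_comm : Commute (lamCorner 3 1 : VP 3) (lamCorner 3 2) := by
  have h : (lam' 3 2 * lam' 3 1 * lam' 2 1 : VP 3) = lam' 2 1 * lam' 3 1 * lam' 3 2 :=
    lam'_mixed_rel (by decide) (by decide) (by decide)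
  simp only [Commute, SemiconjBy, lamCorner, Nat.reduceSub, lamBlock_succ, lamRow_succ,
    lamBlock_zero, lamRow_zero, one_mul, mul_one, ← mul_assoc]
  rw [← h]

namespace IsCabling

variable {s : ∀ m : ℕ, ℕ → (VP m →* VP (m + 1))} {m i : ℕ}

theorem map_lam_of_succ_lt (hs : IsCabling s) {k l : ℕ} (hk : 1 ≤ k) (hkl : k < l)
    (hlm : l ≤ m) (hik : i + 1 < k) : s m i (lam' l k) = lam' (l + 1) (k + 1) := by
  rw [(hs m k l i hk hkl hlm (by omega)).2, if_pos hik]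

theorem map_lam_self_right (hs : IsCabling s) {l : ℕ} (hil : i + 1 < l) (hlm : l ≤ m) :
    s m i (lam' l (i + 1)) = lam' (l + 1) (i + 2) * lam' (l + 1) (i + 1) := by
  rw [(hs m (i + 1) l i (by omega) hil hlm (by omega)).2, if_neg (by omega), if_pos rfl]

theorem map_lam_of_le_of_succ_lt (hs : IsCabling s) {k l : ℕ} (hk : 1 ≤ k) (hki : k ≤ i)
    (hil : i + 1 < l) (hlm : l ≤ m) : s m i (lam' l k) = lam' (l + 1) k := by
  rw [(hs m k l i hk (by omega) hlm (by omega)).2, if_neg (by omega), if_neg (by omega),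
    if_pos hil]

theorem map_lam_self_left (hs : IsCabling s) {k : ℕ} (hki : k < i) (him : i < m) :
    s m i (lam' (i + 1) (k + 1)) =
      lam' (i + 1) (k + 1) *
        (lamRow (i + 1) k * lam' (i + 2) (k + 1) * (lamRow (i + 1) k)⁻¹) := by
  rw [(hs m (k + 1) (i + 1) i (by omega) (by omega) (by omega) him).2, if_neg (by omega),
    if_neg (by omega), if_neg (by omega), if_pos rfl, conjB_succ, inv_inv]

theorem map_lam_of_le (hs : IsCabling s) {k l : ℕ} (hk : 1 ≤ k) (hkl : k < l) (hli : l ≤ i)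
    (him : i < m) : s m i (lam' l k) = lam' l k := by
  rw [(hs m k l i hk hkl (by omega) him).2, if_neg (by omega), if_neg (by omega),
    if_neg (by omega), if_neg (by omega)]

theorem map_lamRow_of_le (hs : IsCabling s) {j t : ℕ} (hji : j ≤ i) (him : i < m)
    (htj : t < j) : s m i (lamRow j t) = lamRow j t := by
  induction t with
  | zero => simp
  | succ t ih =>
    rw [lamRow_succ, map_mul, ih (by omega), hs.map_lam_of_le (by omega) htj hji him,
      ← lamRow_succ]

theorem map_lamRow_self (hs : IsCabling s) {t : ℕ} (hti : t ≤ i) (him : i < m) :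
    s m i (lamRow (i + 1) t) = lamRow (i + 1) t * lamRow (i + 2) t := by
  induction t with
  | zero => simp
  | succ t ih =>
    rw [lamRow_succ, map_mul, ih (by omega), hs.map_lam_self_left (by omega) him, lamRow_succ,
      lamRow_succ]
    group

theorem map_lamRow_of_le_of_succ_lt (hs : IsCabling s) {j t : ℕ} (hti : t ≤ i) (hij : i + 1 < j)
    (hjm : j ≤ m) : s m i (lamRow j t) = lamRow (j + 1) t := by
  induction t with
  | zero => simp
  | succ t ih =>
    rw [lamRow_succ, map_mul, ih (by omega),
      hs.map_lam_of_le_of_succ_lt (by omega) hti hij hjm, lamRow_succ]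

theorem map_lamRow_of_lt (hs : IsCabling s) {j t : ℕ} (hit : i < t) (htj : t < j)
    (hjm : j ≤ m) : s m i (lamRow j t) = lamRow (j + 1) (t + 1) := by
  induction t, hit using Nat.le_induction with
  | base =>
    rw [lamRow_succ, map_mul, hs.map_lam_self_right (by omega) hjm,
      hs.map_lamRow_of_le_of_succ_lt le_rfl (by omega) hjm, mul_assoc, ← lamRow_succ,
      ← lamRow_succ]
  | succ t hit ih =>
    rw [lamRow_succ, map_mul, ih (by omega), hs.map_lam_of_succ_lt (by omega) htj hjm (by omega),
      ← lamRow_succ]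

theorem map_lamBlock_of_le (hs : IsCabling s) {k c : ℕ} (hci : k + c ≤ i) (him : i < m) :
    s m i (lamBlock k c) = lamBlock k c := by
  induction c with
  | zero => simp
  | succ c ih =>
    rw [lamBlock_succ, map_mul, ih (by omega), hs.map_lamRow_of_le (by omega) him (by omega),
      ← lamBlock_succ]

theorem map_lamBlock_of_lt (hs : IsCabling s) {k c : ℕ} (hik : i < k) (hcm : k + c ≤ m) :
    s m i (lamBlock k c) = lamBlock (k + 1) c := by
  induction c with
  | zero => simp
  | succ c ih =>
    rw [lamBlock_succ, map_mul, ih (by omega), hs.map_lamRow_of_lt hik (by omega) (by omega),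
      lamBlock_succ, show k + 1 + c + 1 = k + 1 + 1 + c by omega]

theorem map_lamBlock_of_le_of_lt (hs : IsCabling s) {k c : ℕ} (hki : k ≤ i) (hic : i < k + c)
    (hcm : k + c ≤ m) : s m i (lamBlock k c) = lamBlock k (c + 1) := by
  induction c with
  | zero => omega
  | succ c ih =>
    rw [lamBlock_succ, map_mul, lamBlock_succ, lamBlock_succ]
    rcases Nat.lt_or_ge i (k + c) with hic' | hci
    · rw [ih hic' (by omega), hs.map_lamRow_of_le_of_succ_lt hki (by omega) (by omega),
        lamBlock_succ, show k + 1 + c + 1 = k + 1 + (c + 1) by omega]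
    · obtain rfl : i = k + c := by omega
      rw [hs.map_lamBlock_of_le le_rfl (by omega), Nat.add_right_comm,
        hs.map_lamRow_self hki (by omega), mul_assoc,
        show k + 1 + (c + 1) = k + c + 2 by omega]

theorem map_lamCorner_of_lt (hs : IsCabling s) {k : ℕ} (hik : i < k) (hkm : k ≤ m) :
    s m i (lamCorner m k) = lamCorner (m + 1) (k + 1) := by
  rw [lamCorner, lamCorner, hs.map_lamBlock_of_lt hik (by omega), Nat.add_sub_add_right]

theorem map_lamCorner_of_le (hs : IsCabling s) {k : ℕ} (hki : k ≤ i) (him : i < m) :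
    s m i (lamCorner m k) = lamCorner (m + 1) k := by
  rw [lamCorner, lamCorner, hs.map_lamBlock_of_le_of_lt hki (by omega) (by omega),
    Nat.sub_add_comm (by omega)]

theorem chain_lam_two_one (hs : IsCabling s) (a m : ℕ) :
    chain s a m (lam' 2 1) = lamCorner (m + 2) (min (a + 1) (m + 1)) := by
  induction m with
  | zero => simp [chain, lamCorner, lamBlock_succ, lamRow_succ]
  | succ m ih =>
    rw [chain, MonoidHom.comp_apply, ih]
    split_ifs with ham
    · rw [min_eq_left (by omega), hs.map_lamCorner_of_le (by omega) (by omega),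
        min_eq_left (by omega)]
    · rw [min_eq_right (by omega), hs.map_lamCorner_of_lt (by omega) (by omega),
        min_eq_right (by omega)]

theorem lamCorner_comm (hs : IsCabling s) {m k l : ℕ} (hk : 1 ≤ k) (hkl : k < l) (hlm : l < m) :
    Commute (lamCorner m k : VP m) (lamCorner m l) := by
  induction m generalizing k l with
  | zero => omega
  | succ m ih =>
    rcases (by omega : 2 ≤ k ∨ k = 1 ∧ 3 ≤ l ∨ k = 1 ∧ l = 2 ∧ 3 ≤ m ∨ k = 1 ∧ l = 2 ∧ m = 2)
      with hk2 | ⟨rfl, hl3⟩ | ⟨rfl, rfl, hm3⟩ | ⟨rfl, rfl, rfl⟩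
    · obtain ⟨k, rfl⟩ : ∃ k', k = k' + 1 := ⟨k - 1, by omega⟩
      obtain ⟨l, rfl⟩ : ∃ l', l = l' + 1 := ⟨l - 1, by omega⟩
      have h := (ih (k := k) (l := l) (by omega) (by omega) (by omega)).map (s m 0)
      rwa [hs.map_lamCorner_of_lt (k := k) (by omega) (by omega),
        hs.map_lamCorner_of_lt (k := l) (by omega) (by omega)] at h
    · obtain ⟨l, rfl⟩ : ∃ l', l = l' + 1 := ⟨l - 1, by omega⟩
      have h := (ih (k := 1) (l := l) le_rfl (by omega) (by omega)).map (s m 1)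
      rwa [hs.map_lamCorner_of_le (k := 1) le_rfl (by omega),
        hs.map_lamCorner_of_lt (k := l) (by omega) (by omega)] at h
    · have h := (ih (k := 1) (l := 2) le_rfl (by omega) (by omega)).map (s m 2)
      rwa [hs.map_lamCorner_of_le (k := 1) (by omega) (by omega),
        hs.map_lamCorner_of_le (k := 2) (by omega) (by omega)] at h
    · exact lamCorner_three_comm

theorem bb_eq_lamCorner (hs : IsCabling s) {n k : ℕ} (hk1 : 1 ≤ k) (hk2 : k ≤ n + 1) :
    bb s n k = lamCorner (n + 2) k := by
  rw [bb, hs.chain_lam_two_one, Nat.sub_add_cancel hk1, min_eq_left hk2]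

end IsCabling

/-- (Lemma 1.1, second half.) In `VP (n+2)` (the virtual pure braid
group `VP_{N+1}` with `N = n+1`), the cabled elements
`b_{k, N+1-k} = s_{N-1}⋯s_k ŝ_{k-1} s_{k-2}⋯s_0(λ_{2,1})` pairwise commute for
`1 ≤ k, l ≤ N`. -/
theorem bb_comm (s : ∀ m : ℕ, ℕ → (VP m →* VP (m + 1))) (hs : IsCabling s)
    (n k l : ℕ) (hk1 : 1 ≤ k) (hk2 : k ≤ n + 1) (hl1 : 1 ≤ l) (hl2 : l ≤ n + 1) :
    bb s n k * bb s n l = bb s n l * bb s n k := by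
  rw [hs.bb_eq_lamCorner hk1 hk2, hs.bb_eq_lamCorner hl1 hl2]
  rcases lt_trichotomy k l with hkl | rfl | hlk
  · exact (hs.lamCorner_comm hk1 hkl (by omega)).eq
  · rfl
  · exact (hs.lamCorner_comm hl1 hlk (by omega)).eq.symm
end

section
/- In VP_n (n ≥ 3), each generator λ_{kn} (1 ≤ k ≤ n−1) can be expressed in terms of the cabled elements a_{i,j}: λ_{1n} = a_{1,n-1} a_{1,n-2}^{-1}; λ_{kn} = a_{k-1,n-k} a_{k-1,n-k+1}^{-1} a_{k,n-k} a_{k,n-k-1}^{-1} for 1 < k < n−1; and λ_{n-1,n} = a_{n-2,1} a_{n-2,2}^{-1} a_{n-1,1}. -/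
/-! Write `c_{k,l} = λ_{1l} ⋯ λ_{k-1,l}` (`conjA k l`). Doubling the strand `l = i + 1`, the
conjugating factor in the cabling formula for `s_i(λ_{kl})` is exactly `c_{k,l}`, so
`s_i(c_{k,l}) = c_{k,l+1} c_{k,l}` telescopes; and the last degeneracy commutes with adding a
trivial strand. Induction on the number of strands then gives
`a_{k,n-k} = c_{k+1,n} a_{k,n-1-k}` for `k < n - 1` and `a_{n-1,1} = c_{n,n}`, so every
`c_{k+1,n}` is a quotient of `a`'s, and `λ_{kn} = c_{k,n}⁻¹ c_{k+1,n}`. -/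

lemma VPIdx.mono {n n' : ℕ} {p : ℕ × ℕ} (h : VPIdx n p) (hn : n ≤ n') : VPIdx n' p :=
  ⟨h.1, h.2.1.trans hn, h.2.2.1, h.2.2.2.1.trans hn, h.2.2.2.2⟩

lemma VP.hom_ext {n : ℕ} {G : Type*} [Group G] {f g : VP n →* G}
    (h : ∀ i j, VPIdx n (i, j) → f (lam' i j) = g (lam' i j)) : f = g := by
  refine PresentedGroup.ext fun ⟨⟨i, j⟩, hij⟩ => ?_
  simpa only [lam', dif_pos hij] using h i j hij

section conjA

variable {n : ℕ}

lemma conjA_one (l : ℕ) : (conjA 1 l : VP n) = 1 := by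
  simp [conjA]

lemma conjA_succ {k : ℕ} (hk : 1 ≤ k) (l : ℕ) :
    (conjA (k + 1) l : VP n) = conjA k l * lam' k l := by
  obtain ⟨j, rfl⟩ := Nat.exists_eq_add_of_le' hk
  simp [conjA, List.range_succ]

lemma map_conjA {n' k l l' : ℕ} (f : VP n →* VP n')
    (hf : ∀ j, 1 ≤ j → j < k → f (lam' j l) = lam' j l') :
    f (conjA k l) = conjA k l' := by
  rw [conjA, conjA, map_list_prod, List.map_map]
  congr 1
  refine List.map_congr_left fun j hj => hf (j + 1) (by omega) ?_
  have := List.mem_range.1 hj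
  omega

end conjA

lemma IsIncl.map_conjA {ι : ∀ m : ℕ, VP m →* VP (m + 1)} (hι : IsIncl ι) {M k l : ℕ}
    (hkl : k ≤ l) (hl : l ≤ M) : ι M (conjA k l) = conjA k l :=
  _root_.map_conjA _ fun j hj hjk => hι M j l ⟨hj, by omega, by omega, hl, by omega⟩

namespace IsCabling

variable {s : ∀ m : ℕ, ℕ → (VP m →* VP (m + 1))} (hs : IsCabling s)
include hs

lemma map_lam_of_idx {n i a b : ℕ} (hi : i < n) (h : VPIdx i (a, b)) :
    s n i (lam' a b) = lam' a b := by
  obtain ⟨ha, hai, hb, hbi, hab⟩ := h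
  rcases lt_or_gt_of_ne hab with hlt | hgt
  · have h := (hs n a b i ha hlt (by omega) hi).1
    rwa [if_neg (by omega), if_neg (by omega), if_neg (by omega), if_neg (by omega)] at h
  · have h := (hs n b a i hb hgt (by omega) hi).2
    rwa [if_neg (by omega), if_neg (by omega), if_neg (by omega), if_neg (by omega)] at h

lemma map_incl {ι : ∀ m : ℕ, VP m →* VP (m + 1)} (hι : IsIncl ι) {M : ℕ} (x : VP M) :
    s (M + 1) M (ι M x) = ι (M + 1) (ι M x) := by
  suffices h : (s (M + 1) M).comp (ι M) = (ι (M + 1)).comp (ι M) from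
    DFunLike.congr_fun h x
  refine VP.hom_ext fun i j h => ?_
  simp only [MonoidHom.comp_apply]
  rw [hι M i j h, hs.map_lam_of_idx (Nat.lt_succ_self M) h, hι (M + 1) i j (h.mono M.le_succ)]

lemma map_conjA_of_lt {n i k l : ℕ} (hk : k ≤ i + 1) (hil : i + 1 < l) (hl : l ≤ n) :
    s n i (conjA k l) = conjA k (l + 1) :=
  _root_.map_conjA _ fun j hj hjk => by
    have h := (hs n j l i hj (by omega) hl (by omega)).1
    rwa [if_neg (by omega), if_neg (by omega), if_pos hil] at h

lemma map_conjA_succ_of_lt {n i l : ℕ} (hil : i + 1 < l) (hl : l ≤ n) :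
    s n i (conjA (i + 2) l) = conjA (i + 3) (l + 1) := by
  have h := (hs n (i + 1) l i (by omega) hil hl (by omega)).1
  rw [if_neg (by omega), if_pos rfl] at h
  rw [conjA_succ (by omega), map_mul, hs.map_conjA_of_lt le_rfl hil hl, h,
    conjA_succ (k := i + 2) (by omega), conjA_succ (k := i + 1) (by omega), mul_assoc]

lemma map_conjA_of_eq {n i k : ℕ} (hi : i < n) (hk : 1 ≤ k) (hki : k ≤ i + 1) :
    s n i (conjA k (i + 1)) = conjA k (i + 2) * conjA k (i + 1) := by
  induction k, hk using Nat.le_induction with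
  | base => simp only [conjA_one, map_one, mul_one]
  | succ k hk ih =>
    have h := (hs n k (i + 1) i hk (by omega) (by omega) hi).1
    rw [if_neg (by omega), if_neg (by omega), if_neg (by omega), if_pos rfl] at h
    rw [conjA_succ hk, map_mul, ih (by omega), h, conjA_succ hk, conjA_succ hk]
    group

end IsCabling

section aa

variable (s : ∀ m : ℕ, ℕ → (VP m →* VP (m + 1)))

lemma chain_eq_chain {m skip₁ skip₂ : ℕ} (h₁ : m ≤ skip₁) (h₂ : m ≤ skip₂) :
    chain s skip₁ m = chain s skip₂ m := by
  induction m with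
  | zero => rfl
  | succ m ih =>
    simp only [chain, if_neg (show ¬skip₁ ≤ m by omega), if_neg (show ¬skip₂ ≤ m by omega),
      ih (by omega) (by omega)]

lemma aa_succ_of_le {m k : ℕ} (hk : k ≤ m + 1) :
    aa s (m + 1) k = s (m + 2) (m + 1) (aa s m k) := by
  simp only [aa, chain, MonoidHom.comp_apply, if_pos (show k - 1 ≤ m by omega)]

lemma aa_succ_last (m : ℕ) : aa s (m + 1) (m + 2) = s (m + 2) m (aa s m (m + 1)) := by
  simp only [aa, chain, MonoidHom.comp_apply, if_neg (show ¬m + 2 - 1 ≤ m by omega),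
    chain_eq_chain s (show m ≤ m + 2 - 1 by omega) (show m ≤ m + 1 - 1 by omega)]

variable {s} (hs : IsCabling s) {ι : ∀ m : ℕ, VP m →* VP (m + 1)} (hι : IsIncl ι)
include hs

lemma IsCabling.aa_last (m : ℕ) : aa s m (m + 1) = conjA (m + 2) (m + 2) := by
  induction m with
  | zero => simp [aa, chain, conjA]
  | succ m ih => rw [aa_succ_last, ih, hs.map_conjA_succ_of_lt (by omega) le_rfl]

include hι

lemma IsCabling.aa_diag_succ (m : ℕ) :
    aa s (m + 1) (m + 1) = conjA (m + 2) (m + 3) * ι (m + 2) (aa s m (m + 1)) := by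
  rw [aa_succ_of_le s le_rfl, hs.aa_last, hs.map_conjA_of_eq (by omega) (by omega) le_rfl,
    hι.map_conjA le_rfl (by omega)]

lemma IsCabling.aa_succ_eq_conjA_mul (m k : ℕ) (hk : 1 ≤ k) (hkm : k ≤ m + 1) :
    aa s (m + 1) k = conjA (k + 1) (m + 3) * ι (m + 2) (aa s m k) := by
  induction m generalizing k with
  | zero =>
    obtain rfl : k = 1 := by omega
    exact hs.aa_diag_succ hι 0
  | succ m ih =>
    rcases Nat.lt_or_ge k (m + 2) with hkm | hkm
    · rw [aa_succ_of_le s hkm.le, ih k hk (by omega), map_mul,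
        hs.map_conjA_of_eq (by omega) (by omega) (by omega), hs.map_incl hι, map_mul,
        hι.map_conjA (by omega) (by omega), mul_assoc]
    · obtain rfl : k = m + 2 := by omega
      exact hs.aa_diag_succ hι (m + 1)

end aa

/-- Here `n = m + 3`, `a_{i, n-i} = aa s (m+1) i`, and `a_{i, n-1-i}` is `aa s m i` included
via `ι`. -/
theorem lam_in_terms_of_aa (s : ∀ m : ℕ, ℕ → (VP m →* VP (m + 1)))
    (ι : ∀ m : ℕ, VP m →* VP (m + 1)) (hs : IsCabling s) (hι : IsIncl ι) (m : ℕ) :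
    ((lam' 1 (m + 3) : VP (m + 3)) = aa s (m + 1) 1 * (ι (m + 2) (aa s m 1))⁻¹) ∧
    (∀ k : ℕ, 1 < k → k < m + 2 →
      (lam' k (m + 3) : VP (m + 3)) =
        ι (m + 2) (aa s m (k - 1)) * (aa s (m + 1) (k - 1))⁻¹ *
          aa s (m + 1) k * (ι (m + 2) (aa s m k))⁻¹) ∧
    ((lam' (m + 2) (m + 3) : VP (m + 3)) =
      ι (m + 2) (aa s m (m + 1)) * (aa s (m + 1) (m + 1))⁻¹ * aa s (m + 1) (m + 2)) := by
  have ha := hs.aa_succ_eq_conjA_mul hι m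
  refine ⟨?_, fun k hk hkm => ?_, ?_⟩
  · rw [ha 1 le_rfl (by omega), conjA_succ le_rfl, conjA_one]
    group
  · obtain ⟨j, rfl⟩ : ∃ j, k = j + 2 := ⟨k - 2, by omega⟩
    rw [show j + 2 - 1 = j + 1 by omega, ha (j + 1) (by omega) (by omega),
      ha (j + 2) (by omega) (by omega), conjA_succ (k := j + 2) (by omega)]
    group
  · rw [ha (m + 1) (by omega) le_rfl, hs.aa_last (m + 1), conjA_succ (k := m + 2) (by omega)]
    group
end

section
/- For n ≥ 3, the subgroup T_{n-1} of VP_n generated by the cabled elements a_{k,l}, b_{k,l} with k + l = n equals the subgroup generated by s_0(T_{n-2}) ∪ s_1(T_{n-2}) ∪ ⋯ ∪ s_{n-2}(T_{n-2}), where T_1 = VP_2 and s_i are the strand-doubling homomorphisms. -/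
/-! The cabled elements have explicit normal forms
`a_{k,l} = ∏_{c = k+l, …, k+1} λ_{1,c} ⋯ λ_{k,c}` and `b_{k,l} = ∏_{c = k+1, …, k+l} λ_{c,k} ⋯ λ_{c,1}`,
on which the cabling formulas can be evaluated: `s_i` sends `a_{k,l}` to `a_{k+1,l}` if `i < k`
and to `a_{k,l+1}` otherwise, and likewise for `b`. Hence every `s_i` maps the generators with
`k + l = n` into those with `k + l = n + 1`, and each of the latter arises this way (from
`s_{n-1}` or `s_{n-2}`), so the theorem follows by induction from `T_1 = VP 2 = ⟨λ_{12}, λ_{21}⟩`. -/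

theorem Subgroup.closure_eq_iSup_map_closure {G H ι : Type*} [Group G] [Group H]
    (f : ι → G →* H) (I : Set ι) (S : Set G) (T : Set H)
    (hmaps : ∀ i ∈ I, ∀ x ∈ S, f i x ∈ T) (hcover : ∀ y ∈ T, ∃ i ∈ I, ∃ x ∈ S, f i x = y) :
    closure T = ⨆ i ∈ I, (closure S).map (f i) := by
  apply le_antisymm
  · refine (closure_le _).2 fun y hy => ?_
    obtain ⟨i, hi, x, hx, rfl⟩ := hcover y hy
    exact mem_iSup_of_mem i (mem_iSup_of_mem hi (mem_map_of_mem (f i) (subset_closure hx)))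
  · refine iSup₂_le fun i hi => ?_
    rw [MonoidHom.map_closure]
    exact closure_mono (Set.image_subset_iff.2 fun x hx => hmaps i hi x hx)

namespace VP

def lamCol (n : ℕ) : ℕ → ℕ → VP n
  | 0, _ => 1
  | k + 1, c => lamCol n k c * lam' (k + 1) c

def lamRow (n : ℕ) : ℕ → ℕ → VP n
  | 0, _ => 1
  | k + 1, c => lam' c (k + 1) * lamRow n k c

/-- Normal form of `a_{k,l}`. -/
def aWord (n k : ℕ) : ℕ → VP n
  | 0 => 1
  | l + 1 => lamCol n k (k + l + 1) * aWord n k l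

/-- Normal form of `b_{k,l}`. -/
def bWord (n k : ℕ) : ℕ → VP n
  | 0 => 1
  | l + 1 => bWord n k l * lamRow n k (k + l + 1)

theorem conjA_eq_lamCol (n k l : ℕ) : (conjA k l : VP n) = lamCol n (k - 1) l := by
  unfold conjA
  induction k - 1 with
  | zero => rfl
  | succ j ih => rw [List.prod_range_succ, ih, lamCol]

theorem conjB_eq_inv_lamRow (n k l : ℕ) : (conjB k l : VP n) = (lamRow n (k - 1) l)⁻¹ := by
  unfold conjB
  induction k - 1 with
  | zero => simp [lamRow]
  | succ j ih => rw [List.prod_range_succ, ih, lamRow, mul_inv_rev]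

end VP

namespace IsCabling

variable {s : ∀ m : ℕ, ℕ → (VP m →* VP (m + 1))} (hs : IsCabling s) {m k l i : ℕ}
include hs

section Generators

variable (hk : 1 ≤ k) (hkl : k < l) (hlm : l ≤ m) (him : i < m)
include hk hkl hlm him

theorem map_lam_of_lt_left (h : i + 1 < k) : s m i (lam' k l) = lam' (k + 1) (l + 1) := by
  rw [(hs m k l i hk hkl hlm him).1, if_pos h]

theorem map_lam_of_eq_left (h : i + 1 = k) :
    s m i (lam' k l) = lam' k (l + 1) * lam' (k + 1) (l + 1) := by
  rw [(hs m k l i hk hkl hlm him).1, if_neg (by omega), if_pos h]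

theorem map_lam_of_between (h₁ : k < i + 1) (h₂ : i + 1 < l) :
    s m i (lam' k l) = lam' k (l + 1) := by
  rw [(hs m k l i hk hkl hlm him).1, if_neg (by omega), if_neg (by omega), if_pos h₂]

theorem map_lam_of_eq_right (h : i + 1 = l) :
    s m i (lam' k l) = (VP.lamCol (m + 1) (k - 1) l)⁻¹ * lam' k (l + 1) *
      VP.lamCol (m + 1) (k - 1) l * lam' k l := by
  rw [(hs m k l i hk hkl hlm him).1, if_neg (by omega), if_neg (by omega), if_neg (by omega),
    if_pos h, VP.conjA_eq_lamCol]

theorem map_lam_of_gt_right (h : l < i + 1) : s m i (lam' k l) = lam' k l := by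
  rw [(hs m k l i hk hkl hlm him).1, if_neg (by omega), if_neg (by omega), if_neg (by omega),
    if_neg (by omega)]

theorem map_lam_rev_of_lt_left (h : i + 1 < k) : s m i (lam' l k) = lam' (l + 1) (k + 1) := by
  rw [(hs m k l i hk hkl hlm him).2, if_pos h]

theorem map_lam_rev_of_eq_left (h : i + 1 = k) :
    s m i (lam' l k) = lam' (l + 1) (k + 1) * lam' (l + 1) k := by
  rw [(hs m k l i hk hkl hlm him).2, if_neg (by omega), if_pos h]

theorem map_lam_rev_of_between (h₁ : k < i + 1) (h₂ : i + 1 < l) :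
    s m i (lam' l k) = lam' (l + 1) k := by
  rw [(hs m k l i hk hkl hlm him).2, if_neg (by omega), if_neg (by omega), if_pos h₂]

theorem map_lam_rev_of_eq_right (h : i + 1 = l) :
    s m i (lam' l k) = lam' l k *
      (VP.lamRow (m + 1) (k - 1) l * lam' (l + 1) k * (VP.lamRow (m + 1) (k - 1) l)⁻¹) := by
  rw [(hs m k l i hk hkl hlm him).2, if_neg (by omega), if_neg (by omega), if_neg (by omega),
    if_pos h, VP.conjB_eq_inv_lamRow, inv_inv]

theorem map_lam_rev_of_gt_right (h : l < i + 1) : s m i (lam' l k) = lam' l k := by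
  rw [(hs m k l i hk hkl hlm him).2, if_neg (by omega), if_neg (by omega), if_neg (by omega),
    if_neg (by omega)]

end Generators

section Columns

variable {c : ℕ} (him : i < m)
include him

theorem map_lamCol_of_lt (hc : c < i + 1) (hcm : c ≤ m) (hk : k < c) :
    s m i (VP.lamCol m k c) = VP.lamCol (m + 1) k c := by
  induction k with
  | zero => simp [VP.lamCol]
  | succ k ih =>
    rw [VP.lamCol, map_mul, ih (by omega), hs.map_lam_of_gt_right (by omega) hk hcm him hc,
      VP.lamCol]

theorem map_lamCol_of_eq (hc : i + 1 = c) (hk : k < c) :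
    s m i (VP.lamCol m k c) = VP.lamCol (m + 1) k (c + 1) * VP.lamCol (m + 1) k c := by
  induction k with
  | zero => simp [VP.lamCol]
  | succ k ih =>
    rw [VP.lamCol, map_mul, ih (by omega), hs.map_lam_of_eq_right (by omega) hk (by omega) him hc,
      Nat.add_sub_cancel]
    simp only [VP.lamCol]
    group

theorem map_lamCol_of_gt (hc : i + 1 < c) (hcm : c ≤ m) (hk : k < c) :
    s m i (VP.lamCol m k c) = VP.lamCol (m + 1) (if i + 1 ≤ k then k + 1 else k) (c + 1) := by
  induction k with
  | zero => simp [VP.lamCol]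
  | succ k ih =>
    rw [VP.lamCol, map_mul, ih (by omega)]
    rcases lt_trichotomy (i + 1) (k + 1) with h | h | h
    · rw [hs.map_lam_of_lt_left (by omega) hk hcm him h, if_pos (by omega), if_pos (by omega)]
      simp [VP.lamCol, mul_assoc]
    · rw [hs.map_lam_of_eq_left (by omega) hk hcm him h, if_neg (by omega), if_pos (by omega)]
      simp [VP.lamCol, mul_assoc]
    · rw [hs.map_lam_of_between (by omega) hk hcm him h hc, if_neg (by omega), if_neg (by omega),
        VP.lamCol]

theorem map_lamRow_of_lt_s12 (hc : c < i + 1) (hcm : c ≤ m) (hk : k < c) :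
    s m i (VP.lamRow m k c) = VP.lamRow (m + 1) k c := by
  induction k with
  | zero => simp [VP.lamRow]
  | succ k ih =>
    rw [VP.lamRow, map_mul, ih (by omega), hs.map_lam_rev_of_gt_right (by omega) hk hcm him hc,
      VP.lamRow]

theorem map_lamRow_of_eq (hc : i + 1 = c) (hk : k < c) :
    s m i (VP.lamRow m k c) = VP.lamRow (m + 1) k c * VP.lamRow (m + 1) k (c + 1) := by
  induction k with
  | zero => simp [VP.lamRow]
  | succ k ih =>
    rw [VP.lamRow, map_mul, ih (by omega),
      hs.map_lam_rev_of_eq_right (by omega) hk (by omega) him hc, Nat.add_sub_cancel]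
    simp only [VP.lamRow]
    group

theorem map_lamRow_of_gt (hc : i + 1 < c) (hcm : c ≤ m) (hk : k < c) :
    s m i (VP.lamRow m k c) = VP.lamRow (m + 1) (if i + 1 ≤ k then k + 1 else k) (c + 1) := by
  induction k with
  | zero => simp [VP.lamRow]
  | succ k ih =>
    rw [VP.lamRow, map_mul, ih (by omega)]
    rcases lt_trichotomy (i + 1) (k + 1) with h | h | h
    · rw [hs.map_lam_rev_of_lt_left (by omega) hk hcm him h, if_pos (by omega), if_pos (by omega)]
      simp [VP.lamRow]
    · rw [hs.map_lam_rev_of_eq_left (by omega) hk hcm him h, if_neg (by omega), if_pos (by omega)]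
      simp [VP.lamRow, mul_assoc]
    · rw [hs.map_lam_rev_of_between (by omega) hk hcm him h hc, if_neg (by omega),
        if_neg (by omega), VP.lamRow]

end Columns

section Words

variable (him : i < m)
include him

theorem map_aWord_of_lt (h : k + l < i + 1) (hm : k + l ≤ m) :
    s m i (VP.aWord m k l) = VP.aWord (m + 1) k l := by
  induction l with
  | zero => simp [VP.aWord]
  | succ l ih =>
    rw [VP.aWord, map_mul, ih (by omega) (by omega),
      hs.map_lamCol_of_lt him (by omega) (by omega) (by omega), VP.aWord]

theorem map_bWord_of_lt (h : k + l < i + 1) (hm : k + l ≤ m) :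
    s m i (VP.bWord m k l) = VP.bWord (m + 1) k l := by
  induction l with
  | zero => simp [VP.bWord]
  | succ l ih =>
    rw [VP.bWord, map_mul, ih (by omega) (by omega),
      hs.map_lamRow_of_lt_s12 him (by omega) (by omega) (by omega), VP.bWord]

theorem map_aWord_of_le_left (hik : i + 1 ≤ k) (hm : k + l ≤ m) :
    s m i (VP.aWord m k l) = VP.aWord (m + 1) (k + 1) l := by
  induction l with
  | zero => simp [VP.aWord]
  | succ l ih =>
    rw [VP.aWord, map_mul, ih (by omega),
      hs.map_lamCol_of_gt him (by omega) (by omega) (by omega), if_pos hik, VP.aWord,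
      show k + 1 + l + 1 = k + l + 1 + 1 by omega]

theorem map_bWord_of_le_left (hik : i + 1 ≤ k) (hm : k + l ≤ m) :
    s m i (VP.bWord m k l) = VP.bWord (m + 1) (k + 1) l := by
  induction l with
  | zero => simp [VP.bWord]
  | succ l ih =>
    rw [VP.bWord, map_mul, ih (by omega),
      hs.map_lamRow_of_gt him (by omega) (by omega) (by omega), if_pos hik, VP.bWord,
      show k + 1 + l + 1 = k + l + 1 + 1 by omega]

theorem map_aWord_of_le_right (hki : k ≤ i) (h : i + 1 ≤ k + l) (hm : k + l ≤ m) :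
    s m i (VP.aWord m k l) = VP.aWord (m + 1) k (l + 1) := by
  induction l with
  | zero => omega
  | succ l ih =>
    rcases (Nat.lt_or_eq_of_le h).symm with h | h
    · rw [VP.aWord, map_mul, hs.map_lamCol_of_eq him (by omega) (by omega),
        hs.map_aWord_of_lt him (by omega) (by omega)]
      simp only [VP.aWord]
      group
    · rw [VP.aWord, map_mul, ih (by omega) (by omega),
        hs.map_lamCol_of_gt him (by omega) (by omega) (by omega), if_neg (by omega)]
      rfl

theorem map_bWord_of_le_right (hki : k ≤ i) (h : i + 1 ≤ k + l) (hm : k + l ≤ m) :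
    s m i (VP.bWord m k l) = VP.bWord (m + 1) k (l + 1) := by
  induction l with
  | zero => omega
  | succ l ih =>
    rcases (Nat.lt_or_eq_of_le h).symm with h | h
    · rw [VP.bWord, map_mul, hs.map_lamRow_of_eq him (by omega) (by omega),
        hs.map_bWord_of_lt him (by omega) (by omega)]
      simp only [VP.bWord]
      group
    · rw [VP.bWord, map_mul, ih (by omega) (by omega),
        hs.map_lamRow_of_gt him (by omega) (by omega) (by omega), if_neg (by omega)]
      rfl

end Words

end IsCabling

section CabledFamily

variable (s : ∀ m : ℕ, ℕ → (VP m →* VP (m + 1)))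

theorem chain_succ_of_le_s12 {skip n : ℕ} (h : skip ≤ n) :
    chain s skip (n + 1) = (s (n + 2) (n + 1)).comp (chain s skip n) := by
  rw [chain, if_pos h]

theorem chain_succ_of_gt {skip n : ℕ} (h : n < skip) :
    chain s skip (n + 1) = (s (n + 2) n).comp (chain s skip n) := by
  rw [chain, if_neg (by omega)]

theorem chain_eq_of_le {a b n : ℕ} (ha : n ≤ a) (hb : n ≤ b) : chain s a n = chain s b n := by
  induction n with
  | zero => rfl
  | succ n ih =>
    rw [chain_succ_of_gt s (by omega), chain_succ_of_gt s (by omega), ih (by omega) (by omega)]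

/-- `F n k ∈ VP (n + 2)` plays the role of `a_{k, n+2-k}`: the condition is the rule
`s_i a_{k,l} = a_{k+1,l}` for `i < k` and `s_i a_{k,l} = a_{k,l+1}` for `k ≤ i`. -/
def IsCabledFamily (F : ∀ n : ℕ, ℕ → VP (n + 2)) : Prop :=
  ∀ n i k, i < n + 2 → 1 ≤ k → k ≤ n + 1 →
    s (n + 2) i (F n k) = F (n + 1) (if i < k then k + 1 else k)

variable {s} {F : ∀ n : ℕ, ℕ → VP (n + 2)}

theorem IsCabledFamily.congr {G : ∀ n : ℕ, ℕ → VP (n + 2)} (hF : IsCabledFamily s F)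
    (h : ∀ n k, 1 ≤ k → k ≤ n + 1 → G n k = F n k) : IsCabledFamily s G := by
  intro n i k hi hk₁ hk₂
  rw [h n k hk₁ hk₂, hF n i k hi hk₁ hk₂, h (n + 1) _ (by split_ifs <;> omega)
    (by split_ifs <;> omega)]

theorem IsCabledFamily.chain_apply (hF : IsCabledFamily s F) {n k : ℕ} (hk₁ : 1 ≤ k)
    (hk₂ : k ≤ n + 1) : chain s (k - 1) n (F 0 1) = F n k := by
  induction n generalizing k with
  | zero =>
    obtain rfl : k = 1 := by omega
    rfl
  | succ n ih =>
    rcases Nat.lt_or_ge k (n + 2) with hk | hk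
    · rw [chain_succ_of_le_s12 s (by omega), MonoidHom.comp_apply, ih hk₁ (by omega),
        hF n (n + 1) k (by omega) hk₁ (by omega), if_neg (by omega)]
    · obtain rfl : k = n + 2 := by omega
      rw [chain_succ_of_gt s (by omega), MonoidHom.comp_apply,
        chain_eq_of_le s (b := n + 1 - 1) (by omega) (by omega), ih (by omega) le_rfl,
        hF n n (n + 1) (by omega) (by omega) le_rfl, if_pos (by omega)]

theorem IsCabledFamily.exists_map_eq (hF : IsCabledFamily s F) {n i k : ℕ} (hi : i < n + 2)
    (hk₁ : 1 ≤ k) (hk₂ : k ≤ n + 1) :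
    ∃ k', 1 ≤ k' ∧ k' ≤ n + 2 ∧ s (n + 2) i (F n k) = F (n + 1) k' :=
  ⟨_, by split_ifs <;> omega, by split_ifs <;> omega, hF n i k hi hk₁ hk₂⟩

theorem IsCabledFamily.exists_eq_map (hF : IsCabledFamily s F) {n k : ℕ} (hk₁ : 1 ≤ k)
    (hk₂ : k ≤ n + 2) :
    ∃ i < n + 2, ∃ k', 1 ≤ k' ∧ k' ≤ n + 1 ∧ s (n + 2) i (F n k') = F (n + 1) k := by
  rcases Nat.lt_or_ge k (n + 2) with hk | hk
  · refine ⟨n + 1, by omega, k, hk₁, by omega, ?_⟩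
    rw [hF n _ k (by omega) hk₁ (by omega), if_neg (by omega)]
  · obtain rfl : k = n + 2 := by omega
    refine ⟨n, by omega, n + 1, by omega, le_rfl, ?_⟩
    rw [hF n n _ (by omega) (by omega) le_rfl, if_pos (by omega)]

end CabledFamily

namespace IsCabling

variable {s : ∀ m : ℕ, ℕ → (VP m →* VP (m + 1))} (hs : IsCabling s)
include hs

theorem isCabledFamily_aWord : IsCabledFamily s fun n k => VP.aWord (n + 2) k (n + 2 - k) := by
  intro n i k hi hk₁ hk₂
  dsimp only
  split_ifs with h
  · rw [hs.map_aWord_of_le_left hi h (by omega), show n + 1 + 2 - (k + 1) = n + 2 - k by omega]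
  · rw [hs.map_aWord_of_le_right hi (by omega) (by omega) (by omega),
      show n + 1 + 2 - k = n + 2 - k + 1 by omega]

theorem isCabledFamily_bWord : IsCabledFamily s fun n k => VP.bWord (n + 2) k (n + 2 - k) := by
  intro n i k hi hk₁ hk₂
  dsimp only
  split_ifs with h
  · rw [hs.map_bWord_of_le_left hi h (by omega), show n + 1 + 2 - (k + 1) = n + 2 - k by omega]
  · rw [hs.map_bWord_of_le_right hi (by omega) (by omega) (by omega),
      show n + 1 + 2 - k = n + 2 - k + 1 by omega]

theorem isCabledFamily_aa : IsCabledFamily s (aa s) :=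
  hs.isCabledFamily_aWord.congr fun _ _ hk₁ hk₂ => by
    rw [← hs.isCabledFamily_aWord.chain_apply hk₁ hk₂, aa]
    simp [VP.aWord, VP.lamCol]

theorem isCabledFamily_bb : IsCabledFamily s (bb s) :=
  hs.isCabledFamily_bWord.congr fun _ _ hk₁ hk₂ => by
    rw [← hs.isCabledFamily_bWord.chain_apply hk₁ hk₂, bb]
    simp [VP.bWord, VP.lamRow]

end IsCabling

def cabledSet (s : ∀ m : ℕ, ℕ → (VP m →* VP (m + 1))) (n : ℕ) : Set (VP (n + 2)) :=
  {x | ∃ k : ℕ, 1 ≤ k ∧ k ≤ n + 1 ∧ (x = aa s n k ∨ x = bb s n k)}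

section Closure

variable {s : ∀ m : ℕ, ℕ → (VP m →* VP (m + 1))}

theorem closure_cabledSet_zero : Subgroup.closure (cabledSet s 0) = ⊤ := by
  rw [eq_top_iff, ← PresentedGroup.closure_range_of]
  refine Subgroup.closure_mono ?_
  rintro _ ⟨⟨⟨i, j⟩, hij⟩, rfl⟩
  refine ⟨1, le_rfl, le_rfl, ?_⟩
  obtain ⟨hi, hi', hj, hj', hne⟩ := id hij
  rcases (by omega : (i = 1 ∧ j = 2) ∨ (i = 2 ∧ j = 1)) with ⟨rfl, rfl⟩ | ⟨rfl, rfl⟩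
  exacts [Or.inl (dif_pos hij : lam' 1 2 = _).symm, Or.inr (dif_pos hij : lam' 2 1 = _).symm]

theorem closure_cabledSet_succ (hs : IsCabling s) (n : ℕ) :
    Subgroup.closure (cabledSet s (n + 1)) =
      ⨆ i ∈ Finset.range (n + 2), (Subgroup.closure (cabledSet s n)).map (s (n + 2) i) := by
  refine Subgroup.closure_eq_iSup_map_closure _ _ _ _ ?_ ?_
  · rintro i hi _ ⟨k, hk₁, hk₂, rfl | rfl⟩
    · obtain ⟨k', hk'₁, hk'₂, h⟩ :=
        hs.isCabledFamily_aa.exists_map_eq (Finset.mem_range.1 hi) hk₁ hk₂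
      exact ⟨k', hk'₁, hk'₂, Or.inl h⟩
    · obtain ⟨k', hk'₁, hk'₂, h⟩ :=
        hs.isCabledFamily_bb.exists_map_eq (Finset.mem_range.1 hi) hk₁ hk₂
      exact ⟨k', hk'₁, hk'₂, Or.inr h⟩
  · rintro _ ⟨k, hk₁, hk₂, rfl | rfl⟩
    · obtain ⟨i, hi, k', hk'₁, hk'₂, h⟩ := hs.isCabledFamily_aa.exists_eq_map hk₁ hk₂
      exact ⟨i, Finset.mem_range.2 hi, _, ⟨k', hk'₁, hk'₂, Or.inl rfl⟩, h⟩
    · obtain ⟨i, hi, k', hk'₁, hk'₂, h⟩ := hs.isCabledFamily_bb.exists_eq_map hk₁ hk₂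
      exact ⟨i, Finset.mem_range.2 hi, _, ⟨k', hk'₁, hk'₂, Or.inr rfl⟩, h⟩

theorem closure_cabledSet_eq_TT (hs : IsCabling s) (n : ℕ) :
    Subgroup.closure (cabledSet s n) = TT s (n + 1) := by
  induction n with
  | zero => exact closure_cabledSet_zero
  | succ n ih => rw [closure_cabledSet_succ hs, ih, TT]

end Closure

/-- (Proposition 3.3(1).) For `n = m + 3 ≥ 3`, the subgroup
`T_{n-1}` of `VP n` defined recursively by `T_1 = VP 2`,
`T_{p+1} = ⟨s_0(T_p), …, s_p(T_p)⟩`, coincides with the subgroup generated by the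
cabled elements `a_{k,l}, b_{k,l}` with `k + l = n`. -/
theorem T_eq_closure_cabled (s : ∀ m : ℕ, ℕ → (VP m →* VP (m + 1)))
    (hs : IsCabling s) (m : ℕ) :
    Subgroup.closure
      {x : VP (m + 3) | ∃ k : ℕ, 1 ≤ k ∧ k ≤ m + 2 ∧
        (x = aa s (m + 1) k ∨ x = bb s (m + 1) k)} = TT s (m + 2) :=
  closure_cabledSet_eq_TT hs (m + 1)
end

section
/- For n ≥ 2, VP_{n+1} is generated by VP_n together with the images s_0(VP_n), s_1(VP_n), …, s_{n-1}(VP_n), where VP_n ≤ VP_{n+1} via the inclusion adding a trivial strand at the end and s_i : VP_n → VP_{n+1} are the strand-doubling homomorphisms. -/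
/-
The generators of `VP (n+1)` are the `λ_{ij}` with `i, j ≤ n`, which come from `VP n`, and those
involving the new strand `n+1`. The last degeneracy gives
`s_{n-1}(λ_{kn}) = A⁻¹ λ_{k,n+1} A λ_{kn}` for `k < n`, where the conjugator `A` is a word in
generators of `VP n`; this recovers `λ_{k,n+1}`, and dually `λ_{n+1,k}`. The remaining generator
`λ_{n,n+1}` then comes from `s_{n-2}(λ_{n-1,n}) = λ_{n-1,n+1} λ_{n,n+1}`, and `λ_{n+1,n}`
likewise.
-/

theorem VPIdx_succ_cases {n i j : ℕ} (h : VPIdx (n + 1) (i, j)) :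
    VPIdx n (i, j) ∨ (1 ≤ i ∧ i ≤ n ∧ j = n + 1) ∨ (i = n + 1 ∧ 1 ≤ j ∧ j ≤ n) := by
  unfold VPIdx at h ⊢
  omega

theorem VP.eq_top_of_lam'_mem {n : ℕ} {H : Subgroup (VP n)}
    (h : ∀ i j : ℕ, VPIdx n (i, j) → lam' i j ∈ H) : H = ⊤ := by
  rw [eq_top_iff, ← PresentedGroup.closure_range_of, Subgroup.closure_le]
  rintro _ ⟨⟨⟨i, j⟩, hij⟩, rfl⟩
  have hmem := h i j hij
  rwa [lam', dif_pos hij] at hmem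

section

variable {n : ℕ} {H : Subgroup (VP n)}

theorem conjA_mem {k l : ℕ} (h : ∀ j, 1 ≤ j → j < k → lam' j l ∈ H) :
    conjA k l ∈ H := by
  refine H.list_prod_mem fun x hx => ?_
  obtain ⟨j, hj, rfl⟩ := List.mem_map.mp hx
  exact h (j + 1) (by omega) (by have := List.mem_range.mp hj; omega)

theorem conjB_mem {k l : ℕ} (h : ∀ j, 1 ≤ j → j < k → lam' l j ∈ H) :
    conjB k l ∈ H := by
  refine H.list_prod_mem fun x hx => ?_
  obtain ⟨j, hj, rfl⟩ := List.mem_map.mp hx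
  exact inv_mem (h (j + 1) (by omega) (by have := List.mem_range.mp hj; omega))

end

section NewStrand

variable {s : ∀ m : ℕ, ℕ → (VP m →* VP (m + 1))} (hs : IsCabling s) {n : ℕ}
  {H : Subgroup (VP (n + 1))} (hbase : ∀ i j : ℕ, VPIdx n (i, j) → lam' i j ∈ H)
  (hsH : ∀ i < n, (s n i).range ≤ H)
include hs hbase hsH

theorem lam'_lt_new_strand_mem {k : ℕ} (hk : 1 ≤ k) (hkn : k < n) :
    lam' k (n + 1) ∈ H := by
  have e := (hs n k n (n - 1) hk hkn le_rfl (by omega)).1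
  rw [if_neg (by omega), if_neg (by omega), if_neg (by omega), if_pos (by omega)] at e
  have hA : conjA k n ∈ H :=
    conjA_mem fun j hj hjk => hbase j n ⟨hj, by omega, by omega, le_rfl, by omega⟩
  have hsx : s n (n - 1) (lam' k n) ∈ H := hsH (n - 1) (by omega) ⟨_, rfl⟩
  have hx : lam' k n ∈ H := hbase k n ⟨hk, hkn.le, by omega, le_rfl, hkn.ne⟩
  have : lam' k (n + 1) =
      conjA k n * s n (n - 1) (lam' k n) * (lam' k n)⁻¹ * (conjA k n)⁻¹ := by
    rw [e]; group
  rw [this]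
  exact mul_mem (mul_mem (mul_mem hA hsx) (inv_mem hx)) (inv_mem hA)

theorem lam'_new_strand_lt_mem {k : ℕ} (hk : 1 ≤ k) (hkn : k < n) :
    lam' (n + 1) k ∈ H := by
  have e := (hs n k n (n - 1) hk hkn le_rfl (by omega)).2
  rw [if_neg (by omega), if_neg (by omega), if_neg (by omega), if_pos (by omega)] at e
  have hB : conjB k n ∈ H :=
    conjB_mem fun j hj hjk => hbase n j ⟨by omega, le_rfl, hj, by omega, by omega⟩
  have hsx : s n (n - 1) (lam' n k) ∈ H := hsH (n - 1) (by omega) ⟨_, rfl⟩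
  have hx : lam' n k ∈ H := hbase n k ⟨by omega, le_rfl, hk, hkn.le, hkn.ne'⟩
  have : lam' (n + 1) k =
      conjB k n * (lam' n k)⁻¹ * s n (n - 1) (lam' n k) * (conjB k n)⁻¹ := by
    rw [e]; group
  rw [this]
  exact mul_mem (mul_mem (mul_mem hB (inv_mem hx)) hsx) (inv_mem hB)

theorem lam'_last_new_strand_mem (hn : 2 ≤ n) : lam' n (n + 1) ∈ H := by
  have e := (hs n (n - 1) n (n - 2) (by omega) (by omega) le_rfl (by omega)).1
  rw [if_neg (by omega), if_pos (by omega), Nat.sub_add_cancel (by omega)] at e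
  have : lam' n (n + 1) = (lam' (n - 1) (n + 1))⁻¹ * s n (n - 2) (lam' (n - 1) n) := by
    rw [e]; group
  rw [this]
  exact mul_mem (inv_mem (lam'_lt_new_strand_mem hs hbase hsH (by omega) (by omega)))
    (hsH (n - 2) (by omega) ⟨_, rfl⟩)

theorem lam'_new_strand_last_mem (hn : 2 ≤ n) : lam' (n + 1) n ∈ H := by
  have e := (hs n (n - 1) n (n - 2) (by omega) (by omega) le_rfl (by omega)).2
  rw [if_neg (by omega), if_pos (by omega), Nat.sub_add_cancel (by omega)] at e
  have : lam' (n + 1) n = s n (n - 2) (lam' n (n - 1)) * (lam' (n + 1) (n - 1))⁻¹ := by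
    rw [e]; group
  rw [this]
  exact mul_mem (hsH (n - 2) (by omega) ⟨_, rfl⟩)
    (inv_mem (lam'_new_strand_lt_mem hs hbase hsH (by omega) (by omega)))

end NewStrand

/-- (Proposition 3.3(3).) For `n ≥ 2`,
`VP (n+1) = ⟨VP n, s_0(VP n), s_1(VP n), …, s_{n-1}(VP n)⟩`, where `VP n ≤ VP (n+1)`
via the trivial-strand inclusion `ι` and `s_i` are the strand-doubling homomorphisms. -/
theorem VP_succ_generated (s : ∀ m : ℕ, ℕ → (VP m →* VP (m + 1)))
    (ι : ∀ m : ℕ, VP m →* VP (m + 1)) (hs : IsCabling s) (hι : IsIncl ι)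
    (n : ℕ) (hn : 2 ≤ n) :
    ((ι n).range ⊔ ⨆ i ∈ Finset.range n, (s n i).range) = (⊤ : Subgroup (VP (n + 1))) := by
  set H := (ι n).range ⊔ ⨆ i ∈ Finset.range n, (s n i).range
  have hbase : ∀ i j, VPIdx n (i, j) → lam' i j ∈ H := fun i j hij =>
    le_sup_left (a := (ι n).range) ⟨lam' i j, hι n i j hij⟩
  have hsH : ∀ i < n, (s n i).range ≤ H := fun i hi =>
    le_sup_of_le_right (le_iSup₂_of_le i (Finset.mem_range.mpr hi) le_rfl)
  refine VP.eq_top_of_lam'_mem fun i j hij => ?_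
  rcases VPIdx_succ_cases hij with hij | ⟨hi, hin, rfl⟩ | ⟨rfl, hj, hjn⟩
  · exact hbase i j hij
  · rcases hin.lt_or_eq with hin | rfl
    · exact lam'_lt_new_strand_mem hs hbase hsH hi hin
    · exact lam'_last_new_strand_mem hs hbase hsH hn
  · rcases hjn.lt_or_eq with hjn | rfl
    · exact lam'_new_strand_lt_mem hs hbase hsH hj hjn
    · exact lam'_new_strand_last_mem hs hbase hsH hn
end
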